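/- Let L be an ω-Lie algebra over a field K of characteristic ≠ 2 and let R : L → L be a compatible Rota-Baxter operator of weight 0 on L. Define [x,y]_R := [R(x),y] + [x,R(y)] and ω_R(x,y) := ω(R(x),R(y)). Then R is a compatible Rota-Baxter operator of weight 0 on the ω-Lie algebra L_R = (L, [-,-]_R, ω_R); that is, [R(x),R(y)]_R = R([R(x),y]_R + [x,R(y)]_R) and ω_R(R(x),y) + ω_R(x,R(y)) = 0 for all x,y ∈ L. -/
import Mathlib

/-- If `R` is a compatible Rota-Baxter operator of weight 0 on an ω-Lie
algebra `L`, then `R` is again a compatible Rota-Baxter operator of weight 0 on the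
induced ω-Lie algebra `L_R = (L, [-,-]_R, ω_R)`, where `[x,y]_R = [R x, y] + [x, R y]`
and `ω_R(x,y) = ω(R x, R y)`. -/
theorem compatible_rotaBaxter_on_induced_omegaLie
    {K : Type*} [Field K] (h2 : (2 : K) ≠ 0)
    {L : Type*} [AddCommGroup L] [Module K L]
    (b : L →ₗ[K] L →ₗ[K] L) (ω : L →ₗ[K] L →ₗ[K] K)
    (hskew : ∀ x y : L, b x y = - b y x)
    (hωskew : ∀ x y : L, ω x y = - ω y x)
    (hjac : ∀ x y z : L, b (b x y) z + b (b y z) x + b (b z x) y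
      = ω x y • z + ω y z • x + ω z x • y)
    (R : L →ₗ[K] L)
    (hRB : ∀ x y : L, b (R x) (R y) = R (b (R x) y + b x (R y)))
    (hcomp : ∀ x y : L, ω (R x) y + ω x (R y) = 0)
    (brR : L → L → L) (hbrR : ∀ x y : L, brR x y = b (R x) y + b x (R y))
    (ωR : L → L → K) (hωR : ∀ x y : L, ωR x y = ω (R x) (R y)) :
    (∀ x y : L, brR (R x) (R y) = R (brR (R x) y + brR x (R y))) ∧
    (∀ x y : L, ωR (R x) y + ωR x (R y) = 0) := by
  constructor
  · intro x y
    rw [hbrR, hbrR, hbrR, hRB (R x) y, hRB x (R y), ← map_add]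
  · intro x y
    rw [hωR, hωR]
    exact hcomp (R x) (R y)
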